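/- For the fixed-point-preserving explicit scheme X̄_{(k+1)δt} = ((X̄_{kδt}(1−ωδt) + ΔW_{k+1}/(1−ωδt))² + 2δt)^{1/2} with ΔW_{k+1} ∼ N(0, δt) independent increments, for every integer q ≥ 1 there is a constant C_q such that for all x ≥ 0 and all δt ≤ 1/(2ω), E[(X̄^x_{δt})^{2q}] ≤ e^{C_q δt}(1 + x^{2q}) − 1, where X̄^x_{δt} = ((x(1−ωδt) + W_{δt}/(1−ωδt))² + 2δt)^{1/2}. -/

import Mathlib

/-!
With `c = 1 - ω δt ∈ [1/2, 1]`, the increment `W / c` is centred Gaussian with variance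
`δt / c² ≤ 4 δt`, so the quantity to bound is `E[((a + W)² + 2δt)^q]` with `a = x c ≤ x`.
Convexity of `y ↦ y^q` gives `1 + (y + t)^q ≤ (1 + t)^q (1 + y^q)`, so the shift `2δt` costs
a factor `(1 + 2δt)^q ≤ e^{2qδt}`. In the binomial expansion of `E[(a + W)^{2q}]` the odd
moments of `W` vanish and every even moment `E[W^{2k}]`, `k ≥ 1`, is `O(δt)`; hence
`1 + E[(a + W)^{2q}] ≤ (1 + K δt)(1 + a^{2q}) ≤ e^{K δt}(1 + a^{2q})`.
-/

open MeasureTheory ProbabilityTheory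
open scoped NNReal

theorem pow_le_one_add_pow {y : ℝ} (hy : 0 ≤ y) {i n : ℕ} (hin : i ≤ n) :
    y ^ i ≤ 1 + y ^ n := by
  rcases le_total y 1 with h | h
  · linarith [pow_le_one₀ hy h (n := i), pow_nonneg hy n]
  · linarith [pow_le_pow_right₀ h hin]

theorem one_add_add_pow_le {y t : ℝ} (hy : 0 ≤ y) (ht : 0 ≤ t) (q : ℕ) :
    1 + (y + t) ^ q ≤ (1 + t) ^ q * (1 + y ^ q) := by
  rcases q with _ | q
  · norm_num
  have hs : 0 < 1 + t := by linarith
  have hconv : ((y + t) / (1 + t)) ^ (q + 1) ≤ (y ^ (q + 1) + t) / (1 + t) := by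
    have := (convexOn_pow (q + 1)).2 (Set.mem_Ici.2 hy) (Set.mem_Ici.2 zero_le_one)
      (by positivity : 0 ≤ 1 / (1 + t)) (by positivity : 0 ≤ t / (1 + t)) (by field_simp)
    simp only [smul_eq_mul, one_pow] at this
    calc ((y + t) / (1 + t)) ^ (q + 1) = (1 / (1 + t) * y + t / (1 + t) * 1) ^ (q + 1) := by ring
      _ ≤ 1 / (1 + t) * y ^ (q + 1) + t / (1 + t) * 1 := this
      _ = (y ^ (q + 1) + t) / (1 + t) := by ring
  have hjensen : (y + t) ^ (q + 1) ≤ (1 + t) ^ q * (y ^ (q + 1) + t) := by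
    rw [div_pow, div_le_div_iff₀ (by positivity) hs, pow_succ (1 + t) q, ← mul_assoc] at hconv
    rw [mul_comm ((1 + t) ^ q)]
    exact le_of_mul_le_mul_right hconv hs
  have hs1 : 1 ≤ (1 + t) ^ q := one_le_pow₀ (by linarith)
  have htY : 0 ≤ t * y ^ (q + 1) := by positivity
  calc 1 + (y + t) ^ (q + 1) ≤ 1 + (1 + t) ^ q * (y ^ (q + 1) + t) := by gcongr
    _ ≤ (1 + t) ^ q * (1 + t * y ^ (q + 1)) + (1 + t) ^ q * (y ^ (q + 1) + t) := by
      gcongr; nlinarith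
    _ = (1 + t) ^ (q + 1) * (1 + y ^ (q + 1)) := by ring

namespace ProbabilityTheory

variable {μ : ℝ} {v : ℝ≥0}

theorem integrable_add_pow_gaussianReal (a : ℝ) (n : ℕ) :
    Integrable (fun x ↦ (a + x) ^ n) (gaussianReal μ v) := by
  have h : MemLp (fun x ↦ a + x) n (gaussianReal μ v) :=
    (memLp_const a).add (memLp_id_gaussianReal' n (by simp))
  exact h.integrable_norm_pow'.mono' (by fun_prop) (ae_of_all _ fun x ↦ by simp [norm_pow])

theorem integrable_pow_gaussianReal (n : ℕ) :
    Integrable (fun x ↦ x ^ n) (gaussianReal μ v) := by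
  simpa using integrable_add_pow_gaussianReal (μ := μ) (v := v) 0 n

theorem integral_pow_gaussianReal_of_odd (v : ℝ≥0) {m : ℕ} (hm : Odd m) :
    ∫ x, x ^ m ∂gaussianReal 0 v = 0 := by
  have hneg : (gaussianReal 0 v).map (fun x ↦ -x) = gaussianReal 0 v := by
    simpa using gaussianReal_map_neg (μ := 0) (v := v)
  have h : ∫ x, x ^ m ∂gaussianReal 0 v = ∫ x, (-x) ^ m ∂gaussianReal 0 v := by
    conv_lhs => rw [← hneg]
    exact integral_map (by fun_prop) (by fun_prop)
  simp only [hm.neg_pow, integral_neg] at h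
  linarith

theorem integral_pow_two_mul_gaussianReal (v : ℝ≥0) (k : ℕ) :
    ∫ x, x ^ (2 * k) ∂gaussianReal 0 v = v ^ k * ∫ x, x ^ (2 * k) ∂gaussianReal 0 1 := by
  have hscale : (gaussianReal 0 1).map (fun x ↦ √(v : ℝ) * x) = gaussianReal 0 v := by
    rw [gaussianReal_map_const_mul]
    congr 1
    · simp
    · ext; simp
  rw [← hscale, integral_map (by fun_prop) (by fun_prop)]
  simp_rw [mul_pow, pow_mul, Real.sq_sqrt v.coe_nonneg]
  exact integral_const_mul _ _

theorem integral_pow_gaussianReal_nonneg (v : ℝ≥0) (m : ℕ) :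
    0 ≤ ∫ x, x ^ m ∂gaussianReal 0 v := by
  rcases m.even_or_odd with ⟨k, rfl⟩ | hm
  · exact integral_nonneg fun x ↦ by rw [← two_mul, pow_mul]; positivity
  · rw [integral_pow_gaussianReal_of_odd v hm]

theorem integral_pow_gaussianReal_le {V : ℝ} {m : ℕ} (hm : 1 ≤ m) (hv : (v : ℝ) ≤ V) :
    ∫ x, x ^ m ∂gaussianReal 0 v ≤ v * max 1 V ^ m * ∫ x, x ^ m ∂gaussianReal 0 1 := by
  rcases m.even_or_odd with ⟨k, rfl⟩ | hm
  · rw [← two_mul, integral_pow_two_mul_gaussianReal]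
    gcongr ?_ * _
    · exact integral_pow_gaussianReal_nonneg 1 _
    obtain ⟨j, rfl⟩ : ∃ j, k = j + 1 := ⟨k - 1, by omega⟩
    have hV : (v : ℝ) ≤ max 1 V := hv.trans (le_max_right 1 V)
    calc (v : ℝ) ^ (j + 1) = v * v ^ j := pow_succ' _ _
      _ ≤ v * max 1 V ^ j := by gcongr
      _ ≤ v * max 1 V ^ (2 * (j + 1)) := by
        gcongr
        · exact le_max_left 1 V
        · omega
  · simp [integral_pow_gaussianReal_of_odd _ hm]

theorem integral_add_pow_gaussianReal (a : ℝ) (n : ℕ) :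
    ∫ x, (a + x) ^ n ∂gaussianReal μ v =
      ∑ m ∈ Finset.range (n + 1),
        n.choose m * a ^ (n - m) * ∫ x, x ^ m ∂gaussianReal μ v := by
  simp_rw [add_comm a, add_pow]
  rw [integral_finsetSum _ fun m _ ↦
    ((integrable_pow_gaussianReal m).mul_const _).mul_const _]
  refine Finset.sum_congr rfl fun m _ ↦ ?_
  rw [integral_mul_const, integral_mul_const]
  ring

theorem integral_add_pow_gaussianReal_le (n : ℕ) (V : ℝ) :
    ∃ K, 0 ≤ K ∧ ∀ a, 0 ≤ a → ∀ v : ℝ≥0, (v : ℝ) ≤ V →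
      ∫ x, (a + x) ^ n ∂gaussianReal 0 v ≤ a ^ n + K * v * (1 + a ^ n) := by
  set μₘ : ℕ → ℝ := fun m ↦ ∫ x, x ^ m ∂gaussianReal 0 1
  refine ⟨∑ m ∈ Finset.range n, n.choose (m + 1) * max 1 V ^ (m + 1) * μₘ (m + 1),
    Finset.sum_nonneg fun m _ ↦ ?_, fun a ha v hv ↦ ?_⟩
  · have := integral_pow_gaussianReal_nonneg 1 (m + 1)
    have : (0 : ℝ) ≤ max 1 V := le_max_of_le_left zero_le_one
    positivity
  have hterm : ∀ m ∈ Finset.range n,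
      n.choose (m + 1) * a ^ (n - (m + 1)) * ∫ x, x ^ (m + 1) ∂gaussianReal 0 v ≤
        n.choose (m + 1) * max 1 V ^ (m + 1) * μₘ (m + 1) * v * (1 + a ^ n) := fun m _ ↦
    calc _ ≤ n.choose (m + 1) * (1 + a ^ n) * (v * max 1 V ^ (m + 1) * μₘ (m + 1)) := by
          have := integral_pow_gaussianReal_nonneg v (m + 1)
          gcongr
          · exact pow_le_one_add_pow ha (Nat.sub_le _ _)
          · exact integral_pow_gaussianReal_le (Nat.le_add_left 1 m) hv
      _ = _ := by ring
  calc ∫ x, (a + x) ^ n ∂gaussianReal 0 v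
      = a ^ n + ∑ m ∈ Finset.range n,
          n.choose (m + 1) * a ^ (n - (m + 1)) * ∫ x, x ^ (m + 1) ∂gaussianReal 0 v := by
        rw [integral_add_pow_gaussianReal, Finset.sum_range_succ']
        simp [add_comm]
    _ ≤ a ^ n + ∑ m ∈ Finset.range n,
          n.choose (m + 1) * max 1 V ^ (m + 1) * μₘ (m + 1) * v * (1 + a ^ n) :=
        (add_le_add_iff_left _).2 (Finset.sum_le_sum hterm)
    _ = _ := by rw [Finset.sum_mul, Finset.sum_mul]

theorem integral_sq_add_pow_gaussianReal_le (q : ℕ) (V : ℝ) :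
    ∃ K, 0 ≤ K ∧ ∀ a, 0 ≤ a → ∀ t, 0 ≤ t → ∀ v : ℝ≥0, (v : ℝ) ≤ V →
      ∫ x, ((a + x) ^ 2 + t) ^ q ∂gaussianReal 0 v ≤
        Real.exp (q * t + K * v) * (1 + a ^ (2 * q)) - 1 := by
  obtain ⟨K, hK, hmoment⟩ := integral_add_pow_gaussianReal_le (2 * q) V
  refine ⟨K, hK, fun a ha t ht v hv ↦ ?_⟩
  have hc : (1 + t) ^ q ≤ Real.exp (q * t) := by
    rw [Real.exp_nat_mul]
    gcongr
    linarith [Real.add_one_le_exp t]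
  set c := (1 + t) ^ q
  have hpointwise : ∀ x : ℝ, ((a + x) ^ 2 + t) ^ q ≤ c - 1 + c * (a + x) ^ (2 * q) := by
    intro x
    have := one_add_add_pow_le (sq_nonneg (a + x)) ht q
    rw [← pow_mul] at this
    linarith
  have hdom : Integrable (fun x ↦ c - 1 + c * (a + x) ^ (2 * q)) (gaussianReal 0 v) :=
    (integrable_const _).add ((integrable_add_pow_gaussianReal a _).const_mul _)
  have hint : Integrable (fun x ↦ ((a + x) ^ 2 + t) ^ q) (gaussianReal 0 v) :=
    hdom.mono' (by fun_prop) (ae_of_all _ fun x ↦ by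
      rw [Real.norm_of_nonneg (by positivity)]; exact hpointwise x)
  have hI : 0 ≤ ∫ x, (a + x) ^ (2 * q) ∂gaussianReal 0 v :=
    integral_nonneg fun x ↦ by rw [pow_mul]; positivity
  have hmoment' : 1 + ∫ x, (a + x) ^ (2 * q) ∂gaussianReal 0 v ≤
      Real.exp (K * v) * (1 + a ^ (2 * q)) := by
    nlinarith [hmoment a ha v hv, Real.add_one_le_exp (K * v), pow_nonneg ha (2 * q)]
  calc ∫ x, ((a + x) ^ 2 + t) ^ q ∂gaussianReal 0 v
      ≤ ∫ x, (c - 1 + c * (a + x) ^ (2 * q)) ∂gaussianReal 0 v :=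
        integral_mono hint hdom hpointwise
    _ = c * (1 + ∫ x, (a + x) ^ (2 * q) ∂gaussianReal 0 v) - 1 := by
        rw [integral_add (integrable_const _) ((integrable_add_pow_gaussianReal a _).const_mul _),
          integral_const_mul]
        simp
        ring
    _ ≤ Real.exp (q * t) * (Real.exp (K * v) * (1 + a ^ (2 * q))) - 1 := by gcongr
    _ = Real.exp (q * t + K * v) * (1 + a ^ (2 * q)) - 1 := by rw [Real.exp_add]; ring

end ProbabilityTheory

/-- One-step moment bound for the positivity-preserving explicit scheme
`X̄^x_{δt} = ((x(1−ωδt) + W_{δt}/(1−ωδt))² + 2δt)^{1/2}` with `W_{δt} ∼ N(0,δt)`: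
for every `q ≥ 1` there is `C_q` such that for all `x ≥ 0` and `0 < δt ≤ 1/(2ω)`,
`E[(X̄^x_{δt})^{2q}] ≤ e^{C_q δt}(1 + x^{2q}) − 1`. -/
theorem explicit_scheme_moment_bound
    (ω₀ : ℝ) (hω : 0 < ω₀) (q : ℕ) (hq : 1 ≤ q) :
    ∃ C : ℝ, 0 < C ∧
      ∀ x : ℝ, 0 ≤ x → ∀ δt : ℝ, 0 < δt → δt ≤ 1 / (2 * ω₀) →
        ∫ w, (((x * (1 - ω₀ * δt) + w / (1 - ω₀ * δt)) ^ 2 + 2 * δt) ^ ((1:ℝ)/2)) ^ (2 * q)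
            ∂(gaussianReal 0 δt.toNNReal)
          ≤ Real.exp (C * δt) * (1 + x ^ (2 * q)) - 1 := by
  obtain ⟨K, hK, hstep⟩ := integral_sq_add_pow_gaussianReal_le q (2 / ω₀)
  refine ⟨2 * q + 4 * K, by positivity, fun x hx δt hδt hδtω ↦ ?_⟩
  have hωδt : ω₀ * δt ≤ 1 / 2 := by
    rw [le_div_iff₀ (by positivity)] at hδtω
    linarith
  set c := 1 - ω₀ * δt
  have hc₀ : 1 / 2 ≤ c := by linarith
  have hc₁ : c ≤ 1 := by nlinarith
  set v : ℝ≥0 := δt.toNNReal / .mk (c ^ 2) (sq_nonneg c)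
  have hv : (v : ℝ) ≤ 4 * δt := by
    simp only [v, NNReal.coe_div, NNReal.coe_mk, Real.coe_toNNReal _ hδt.le]
    rw [div_le_iff₀ (by positivity)]
    nlinarith [mul_le_mul hc₀ hc₀ (by norm_num) (by linarith)]
  have hmap : (gaussianReal 0 δt.toNNReal).map (· / c) = gaussianReal 0 v := by
    simpa using gaussianReal_map_div_const (μ := 0) (v := δt.toNNReal) c
  calc ∫ w, (((x * c + w / c) ^ 2 + 2 * δt) ^ ((1:ℝ)/2)) ^ (2 * q)
          ∂gaussianReal 0 δt.toNNReal
      = ∫ u, ((x * c + u) ^ 2 + 2 * δt) ^ q ∂gaussianReal 0 v := by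
        rw [← hmap, integral_map (by fun_prop) (by fun_prop)]
        refine integral_congr_ae (ae_of_all _ fun w ↦ ?_)
        dsimp only
        rw [← Real.sqrt_eq_rpow, pow_mul, Real.sq_sqrt (by positivity)]
    _ ≤ Real.exp (q * (2 * δt) + K * v) * (1 + (x * c) ^ (2 * q)) - 1 :=
        hstep _ (by positivity) _ (by positivity) v (by rw [le_div_iff₀ hω]; nlinarith)
    _ ≤ Real.exp ((2 * q + 4 * K) * δt) * (1 + x ^ (2 * q)) - 1 := by
        gcongr
        · nlinarith
        · exact mul_le_of_le_one_right hx hc₁
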